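/- If an accept-reject-based Markov kernel P is (ρ, M)-geometrically ergodic, then ρ ≥ 1 − inf_{θ∈Θ} A(θ), where A(θ) is the acceptance probability at θ. -/

import Mathlib

open MeasureTheory

variable {Ω : Type*} [MeasurableSpace Ω]

/-- The acceptance probability `A(θ) = ∫ a(θ,θ') q(θ,θ') dλ(θ')`. -/
noncomputable def acceptProb (lam : Measure Ω) (a q : Ω → Ω → ℝ) (θ : Ω) : ℝ :=
  ∫ θ', a θ θ' * q θ θ' ∂lam

/-- The accept-reject-based Markov kernel
`P(θ,B) = ∫_B a(θ,θ') q(θ,θ') dλ(θ') + δ_θ(B) (1 − A(θ))`. -/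
noncomputable def arbKernel (lam : Measure Ω) (a q : Ω → Ω → ℝ) (θ : Ω) : Measure Ω :=
  lam.withDensity (fun θ' => ENNReal.ofReal (a θ θ' * q θ θ')) +
    (ENNReal.ofReal (1 - acceptProb lam a q θ)) • Measure.dirac θ

/-- The `t`-step iterate `P^t(θ,·)` of a Markov kernel, with `P^0(θ,·) = δ_θ`. -/
noncomputable def iterK (P : Ω → Measure Ω) : ℕ → Ω → Measure Ω
  | 0 => fun θ => Measure.dirac θ
  | (t + 1) => fun θ => (iterK P t θ).bind P

/-- Total variation distance:
`‖μ − ν‖_TV = sup { ∫ f dμ − ∫ f dν : f measurable, 0 ≤ f ≤ 1 }`. -/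
noncomputable def tvDist (μ ν : Measure Ω) : ℝ :=
  ⨆ f : {f : Ω → ℝ // Measurable f ∧ ∀ x, f x ∈ Set.Icc (0:ℝ) 1},
    (∫ x, f.1 x ∂μ - ∫ x, f.1 x ∂ν)

/-! A rejected proposal leaves the chain where it is, so `P(θ, {θ}) ≥ 1 - A(θ)` and, iterating,
`P^t(θ, {θ}) ≥ (1 - A(θ))^t`. As `Π` has a density with respect to `λ` and `λ({θ}) = 0`, `Π` does
not charge `{θ}`; testing against the indicator of `{θ}` gives
`(1 - A(θ))^t ≤ ‖P^t(θ,·) - Π‖_TV ≤ M(θ) ρ^t` for all `t ≥ 1`, which forces `1 - A(θ) ≤ ρ`. -/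

open ProbabilityTheory Filter

lemma le_of_forall_pow_le_mul_pow {c ρ M : ℝ} (hρ : 0 < ρ)
    (h : ∀ t : ℕ, 1 ≤ t → c ^ t ≤ M * ρ ^ t) : c ≤ ρ := by
  by_contra! hlt
  have hgrow := tendsto_pow_atTop_atTop_of_one_lt ((one_lt_div hρ).2 hlt)
  obtain ⟨t, hMt, ht⟩ := (hgrow.eventually_gt_atTop M).and (eventually_ge_atTop 1) |>.exists
  rw [div_pow, lt_div_iff₀ (pow_pos hρ t)] at hMt
  linarith [h t ht]

lemma measureReal_sub_le_tvDist (μ ν : Measure Ω) [IsProbabilityMeasure μ] {s : Set Ω}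
    (hs : MeasurableSet s) : μ.real s - ν.real s ≤ tvDist μ ν := by
  have hbdd : BddAbove (Set.range
      fun f : {f : Ω → ℝ // Measurable f ∧ ∀ x, f x ∈ Set.Icc (0:ℝ) 1} =>
        ∫ x, f.1 x ∂μ - ∫ x, f.1 x ∂ν) := by
    refine ⟨1, Set.forall_mem_range.2 fun ⟨f, _, hf01⟩ => ?_⟩
    have hμ : ∫ x, f x ∂μ ≤ ∫ _, (1 : ℝ) ∂μ :=
      integral_mono_of_nonneg (f := f) (.of_forall fun x => (hf01 x).1) (integrable_const 1)
        (.of_forall fun x => (hf01 x).2)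
    rw [integral_const, probReal_univ, one_smul] at hμ
    linarith [integral_nonneg (μ := ν) (f := f) fun x => (hf01 x).1]
  have h := le_ciSup hbdd ⟨s.indicator 1, measurable_one.indicator hs,
    fun x => by by_cases hx : x ∈ s <;> simp [hx]⟩
  simpa [tvDist, integral_indicator_one hs] using h

section Iterates

variable {P : Ω → Measure Ω}

lemma isProbabilityMeasure_iterK (hP : Measurable P) (hprob : ∀ θ, IsProbabilityMeasure (P θ))
    (t : ℕ) (θ : Ω) : IsProbabilityMeasure (iterK P t θ) := by
  induction t generalizing θ with
  | zero => exact Measure.dirac.isProbabilityMeasure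
  | succ t ih =>
    have := ih θ
    exact isProbabilityMeasure_bind hP.aemeasurable (.of_forall hprob)

lemma pow_le_iterK_apply_singleton (hP : Measurable P) {θ : Ω} (hθ : MeasurableSet {θ})
    {c : ENNReal} (hc : c ≤ P θ {θ}) (t : ℕ) : c ^ t ≤ iterK P t θ {θ} := by
  induction t with
  | zero => simp [iterK]
  | succ t ih =>
    calc c ^ (t + 1) ≤ P θ {θ} * iterK P t θ {θ} := by rw [pow_succ']; exact mul_le_mul' hc ih
      _ = ∫⁻ x in {θ}, P x {θ} ∂iterK P t θ :=
          (lintegral_singleton' ((Measure.measurable_coe hθ).comp hP) θ).symm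
      _ ≤ ∫⁻ x, P x {θ} ∂iterK P t θ := setLIntegral_le_lintegral _ _
      _ = iterK P (t + 1) θ {θ} := by rw [iterK, Measure.bind_apply hθ hP.aemeasurable]

end Iterates

section AcceptReject

variable {lam : Measure Ω} {a q : Ω → Ω → ℝ}

lemma integrable_acceptance_density (ha01 : ∀ θ θ', a θ θ' ∈ Set.Icc (0:ℝ) 1)
    (hq0 : ∀ θ θ', 0 ≤ q θ θ') (hq1 : ∀ θ, ∫ θ', q θ θ' ∂lam = 1)
    (ham : Measurable (Function.uncurry a)) (hqm : Measurable (Function.uncurry q)) (θ : Ω) :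
    Integrable (fun θ' => a θ θ' * q θ θ') lam := by
  refine (Integrable.of_integral_ne_zero (f := q θ) (by simp [hq1 θ])).mono'
    (ham.of_uncurry_left.mul hqm.of_uncurry_left).aestronglyMeasurable (.of_forall fun θ' => ?_)
  rw [Real.norm_eq_abs, abs_of_nonneg (mul_nonneg (ha01 θ θ').1 (hq0 θ θ'))]
  exact mul_le_of_le_one_left (hq0 θ θ') (ha01 θ θ').2

lemma acceptProb_mem_Icc (ha01 : ∀ θ θ', a θ θ' ∈ Set.Icc (0:ℝ) 1)
    (hq0 : ∀ θ θ', 0 ≤ q θ θ') (hq1 : ∀ θ, ∫ θ', q θ θ' ∂lam = 1) (θ : Ω) :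
    acceptProb lam a q θ ∈ Set.Icc 0 1 :=
  ⟨integral_nonneg fun θ' => mul_nonneg (ha01 θ θ').1 (hq0 θ θ'),
    hq1 θ ▸ integral_mono_of_nonneg (.of_forall fun θ' => mul_nonneg (ha01 θ θ').1 (hq0 θ θ'))
      (.of_integral_ne_zero (f := q θ) (by simp [hq1 θ]))
      (.of_forall fun θ' => mul_le_of_le_one_left (hq0 θ θ') (ha01 θ θ').2)⟩

lemma measurable_acceptProb [SFinite lam] (ham : Measurable (Function.uncurry a))
    (hqm : Measurable (Function.uncurry q)) : Measurable (acceptProb lam a q) :=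
  (ham.mul hqm).stronglyMeasurable.integral_prod_right'.measurable

lemma measurable_arbKernel [SFinite lam] (ham : Measurable (Function.uncurry a))
    (hqm : Measurable (Function.uncurry q)) : Measurable (arbKernel lam a q) := by
  have hdens : Measurable (Function.uncurry fun θ θ' => ENNReal.ofReal (a θ θ' * q θ θ')) :=
    ENNReal.measurable_ofReal.comp (ham.mul hqm)
  have hrej : Measurable (Function.uncurry fun θ (_ : Ω) =>
      ENNReal.ofReal (1 - acceptProb lam a q θ)) :=
    (ENNReal.measurable_ofReal.comp
      (measurable_const.sub (measurable_acceptProb ham hqm))).comp measurable_fst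
  let κ : Kernel Ω Ω :=
    (Kernel.const Ω lam).withDensity (fun θ θ' => ENNReal.ofReal (a θ θ' * q θ θ')) +
      Kernel.id.withDensity fun θ _ => ENNReal.ofReal (1 - acceptProb lam a q θ)
  have hκ : arbKernel lam a q = κ := by
    funext θ
    simp [κ, arbKernel, Kernel.withDensity_apply _ hdens, Kernel.withDensity_apply _ hrej,
      withDensity_const, Kernel.id_apply]
  exact hκ ▸ κ.measurable

lemma isProbabilityMeasure_arbKernel (ha01 : ∀ θ θ', a θ θ' ∈ Set.Icc (0:ℝ) 1)
    (hq0 : ∀ θ θ', 0 ≤ q θ θ') (hq1 : ∀ θ, ∫ θ', q θ θ' ∂lam = 1)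
    (ham : Measurable (Function.uncurry a)) (hqm : Measurable (Function.uncurry q)) (θ : Ω) :
    IsProbabilityMeasure (arbKernel lam a q θ) := by
  have hA := acceptProb_mem_Icc ha01 hq0 hq1 θ
  constructor
  rw [arbKernel, Measure.add_apply, withDensity_apply _ .univ, Measure.restrict_univ,
    ← ofReal_integral_eq_lintegral_ofReal (integrable_acceptance_density ha01 hq0 hq1 ham hqm θ)
      (.of_forall fun θ' => mul_nonneg (ha01 θ θ').1 (hq0 θ θ')),
    Measure.smul_apply, measure_univ, smul_eq_mul, mul_one]
  change ENNReal.ofReal (acceptProb lam a q θ) + _ = 1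
  rw [← ENNReal.ofReal_add hA.1 (sub_nonneg.2 hA.2), add_sub_cancel, ENNReal.ofReal_one]

lemma one_sub_acceptProb_pow_le_iterK_arbKernel [SFinite lam]
    (ha01 : ∀ θ θ', a θ θ' ∈ Set.Icc (0:ℝ) 1)
    (hq0 : ∀ θ θ', 0 ≤ q θ θ') (hq1 : ∀ θ, ∫ θ', q θ θ' ∂lam = 1)
    (ham : Measurable (Function.uncurry a)) (hqm : Measurable (Function.uncurry q))
    {θ : Ω} (hθ : MeasurableSet {θ}) (t : ℕ) :
    (1 - acceptProb lam a q θ) ^ t ≤ (iterK (arbKernel lam a q) t θ).real {θ} := by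
  have := isProbabilityMeasure_iterK (measurable_arbKernel ham hqm)
    (isProbabilityMeasure_arbKernel ha01 hq0 hq1 ham hqm) t θ
  have hrej : ENNReal.ofReal (1 - acceptProb lam a q θ) ≤ arbKernel lam a q θ {θ} := by
    simp [arbKernel]
  have h := pow_le_iterK_apply_singleton (measurable_arbKernel ham hqm) hθ hrej t
  rw [← ENNReal.ofReal_pow (sub_nonneg.2 (acceptProb_mem_Icc ha01 hq0 hq1 θ).2)] at h
  exact (ENNReal.ofReal_le_iff_le_toReal (measure_ne_top _ _)).1 h

end AcceptReject

theorem arb_geometric_rate_lower_bound_general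
    (lam : Measure Ω) [SigmaFinite lam]
    (Pi : Measure Ω)
    (Θ : Set Ω) (hΘne : Θ.Nonempty)
    (pi : Ω → ℝ)
    (hdens : Pi = lam.withDensity (fun x => ENNReal.ofReal (pi x)))
    (hsing : ∀ θ ∈ Θ, MeasurableSet {θ} ∧ lam {θ} = 0)
    (a q : Ω → Ω → ℝ)
    (ham : Measurable (Function.uncurry a)) (hqm : Measurable (Function.uncurry q))
    (ha01 : ∀ θ θ', a θ θ' ∈ Set.Icc (0:ℝ) 1)
    (hq0 : ∀ θ θ', 0 ≤ q θ θ') (hq1 : ∀ θ, ∫ θ', q θ θ' ∂lam = 1)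
    (ρ : ℝ) (hρ : ρ ∈ Set.Ioo (0:ℝ) 1)
    (Mf : Ω → ℝ)
    (hge : ∀ θ ∈ Θ, ∀ t : ℕ, 1 ≤ t →
      tvDist (iterK (arbKernel lam a q) t θ) Pi ≤ Mf θ * ρ ^ t) :
    1 - ⨅ θ : Θ, acceptProb lam a q θ ≤ ρ := by
  have hstay : ∀ θ ∈ Θ, 1 - acceptProb lam a q θ ≤ ρ := by
    intro θ hθ
    obtain ⟨hθs, hlamθ⟩ := hsing θ hθ
    have hPiθ : Pi.real {θ} = 0 := by
      rw [measureReal_def, hdens, withDensity_apply _ hθs, setLIntegral_measure_zero _ _ hlamθ,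
        ENNReal.toReal_zero]
    refine le_of_forall_pow_le_mul_pow (M := Mf θ) hρ.1 fun t ht => ?_
    have := isProbabilityMeasure_iterK (measurable_arbKernel ham hqm)
      (isProbabilityMeasure_arbKernel ha01 hq0 hq1 ham hqm) t θ
    calc (1 - acceptProb lam a q θ) ^ t
        ≤ (iterK (arbKernel lam a q) t θ).real {θ} - Pi.real {θ} := by
          rw [hPiθ, sub_zero]
          exact one_sub_acceptProb_pow_le_iterK_arbKernel ha01 hq0 hq1 ham hqm hθs t
      _ ≤ tvDist (iterK (arbKernel lam a q) t θ) Pi := measureReal_sub_le_tvDist _ _ hθs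
      _ ≤ Mf θ * ρ ^ t := hge θ hθ t ht
  have : Nonempty Θ := hΘne.to_subtype
  linarith [le_ciInf fun θ : Θ => (sub_le_comm.1 (hstay θ θ.2) : 1 - ρ ≤ acceptProb lam a q θ)]

/-- Theorem 2: if the ARB kernel `P` is `(ρ, M)`-geometrically ergodic, then
`ρ ≥ 1 − inf_{θ ∈ Θ} A(θ)`. -/
theorem arb_geometric_rate_lower_bound
    (lam : Measure Ω) [SigmaFinite lam]
    (Pi : Measure Ω) [IsProbabilityMeasure Pi]
    (Θ : Set Ω) (hΘne : Θ.Nonempty) (hΘmeas : MeasurableSet Θ)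
    (pi : Ω → ℝ) (hpim : Measurable pi)
    (hdens : Pi = lam.withDensity (fun x => ENNReal.ofReal (pi x)))
    (hpos : ∀ θ ∈ Θ, 0 < pi θ) (hzero : ∀ θ ∉ Θ, pi θ = 0)
    (hsing : ∀ θ ∈ Θ, MeasurableSet {θ} ∧ lam {θ} = 0)
    (a q : Ω → Ω → ℝ)
    (ham : Measurable (Function.uncurry a)) (hqm : Measurable (Function.uncurry q))
    (ha01 : ∀ θ θ', a θ θ' ∈ Set.Icc (0:ℝ) 1)
    (hq0 : ∀ θ θ', 0 ≤ q θ θ') (hq1 : ∀ θ, ∫ θ', q θ θ' ∂lam = 1)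
    (hinv : Pi.bind (arbKernel lam a q) = Pi)
    (ρ : ℝ) (hρ : ρ ∈ Set.Ioo (0:ℝ) 1)
    (Mf : Ω → ℝ) (hM : ∀ θ ∈ Θ, 0 < Mf θ)
    (hge : ∀ θ ∈ Θ, ∀ t : ℕ, 1 ≤ t →
      tvDist (iterK (arbKernel lam a q) t θ) Pi ≤ Mf θ * ρ ^ t) :
    1 - ⨅ θ : Θ, acceptProb lam a q θ ≤ ρ :=
  arb_geometric_rate_lower_bound_general lam Pi Θ hΘne pi hdens hsing a q ham hqm ha01 hq0 hq1 ρ hρ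
    Mf hge
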